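/- An orthogonal lub-complete poset P is paraorthomodular if and only if for all x, y, x →_S y = {1} implies x ≤ y, equivalently x →_D y = {1} implies x ≤ y. Consequently, P is orthomodular if and only if (x ≤ y ⇔ x →_S y = {1}) for all x, y, equivalently (x ≤ y ⇔ x →_D y = {1}). -/
import Mathlib


open Set

variable {P : Type*} [PartialOrder P] [BoundedOrder P]

/-- Maximal elements of a subset of a poset. -/
def MaxE (A : Set P) : Set P := {m | m ∈ A ∧ ∀ x ∈ A, m ≤ x → x = m}

/-- Minimal elements of a subset of a poset. -/
def MinE (A : Set P) : Set P := {m | m ∈ A ∧ ∀ x ∈ A, x ≤ m → x = m}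

/-- `c` is an antitone involution. -/
def HasAntitoneInvol (c : P → P) : Prop :=
  (∀ x y : P, x ≤ y → c y ≤ c x) ∧ ∀ x : P, c (c x) = x

/-- Orthogonality: the join of two orthogonal elements exists. -/
def IsOrthogonalPoset (c : P → P) : Prop :=
  ∀ x y : P, x ≤ c y → ∃ z, IsLUB {x, y} z

/-- lub-complete (together with its dual, mub-complete): every lower bound of a
finite set lies below a maximal lower bound, and dually. -/
def IsLubComplete : Prop :=
  (∀ A : Set P, A.Finite → ∀ x ∈ lowerBounds A, ∃ m ∈ MaxE (lowerBounds A), x ≤ m) ∧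
  (∀ A : Set P, A.Finite → ∀ x ∈ upperBounds A, ∃ m ∈ MinE (upperBounds A), m ≤ x)

/-- Distributivity of a poset via the LU-identity L(U(x,y),z) = LU(L(x,z),L(y,z)). -/
def IsDistribPoset : Prop :=
  ∀ x y z : P, lowerBounds (upperBounds {x, y} ∪ {z}) =
    lowerBounds (upperBounds (lowerBounds ({x, z} : Set P) ∪ lowerBounds ({y, z} : Set P)))

/-- `c x` is a complement of `x`: L(x, x') = L(P) and U(x, x') = U(P). -/
def IsComplementedBy (c : P → P) : Prop :=
  ∀ x : P, lowerBounds ({x, c x} : Set P) = lowerBounds (univ : Set P) ∧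
    upperBounds ({x, c x} : Set P) = upperBounds (univ : Set P)

/-- Orthocomplemented: x ∨ x' = 1 for all x. -/
def IsOrthocomplemented (c : P → P) : Prop := ∀ x : P, IsLUB {x, c x} ⊤

/-- Paraorthomodular: x ≤ y and x' ∧ y = 0 imply x = y. -/
def IsParaOM (c : P → P) : Prop :=
  ∀ x y : P, x ≤ y → IsGLB {c x, y} ⊥ → x = y

/-- Orthomodular poset: orthogonal and x ≤ y implies x ∨ (y ∧ x') = y. -/
def IsOM (c : P → P) : Prop :=
  IsOrthogonalPoset c ∧ ∀ x y : P, x ≤ y → ∃ m, IsGLB {y, c x} m ∧ IsLUB {x, m} y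

/-- Weakly Boolean: x ∧ y = 0 and x ∧ y' = 0 imply x = 0. -/
def IsWeaklyBoolean (c : P → P) : Prop :=
  ∀ x y : P, IsGLB {x, y} ⊥ → IsGLB {x, c y} ⊥ → x = ⊥

/-- Classical implication x →_C y := Min U(x', y). -/
def impC (c : P → P) (x y : P) : Set P := MinE (upperBounds ({c x, y} : Set P))

/-- Sasaki implication x →_S y := x' ∨ Max L(x, y). -/
def impS (c : P → P) (x y : P) : Set P :=
  {z | ∃ w ∈ MaxE (lowerBounds ({x, y} : Set P)), IsLUB {c x, w} z}

/-- Dishkant implication x →_D y := y ∨ Max L(x', y'). -/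
def impD (c : P → P) (x y : P) : Set P :=
  {z | ∃ w ∈ MaxE (lowerBounds ({c x, c y} : Set P)), IsLUB {y, w} z}

/-- Kalmbach implication
x →_K y := Max L(x',y) ∨ Max L(x',y') ∨ (x ∧ Min U(x',y)). -/
def impK (c : P → P) (x y : P) : Set P :=
  {z | ∃ a ∈ MaxE (lowerBounds ({c x, y} : Set P)),
       ∃ b ∈ MaxE (lowerBounds ({c x, c y} : Set P)),
       ∃ u ∈ MinE (upperBounds ({c x, y} : Set P)),
       ∃ m, IsGLB {x, u} m ∧ IsLUB {a, b, m} z}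

/-- Non-tolens implication x →_N y := y' →_K x'. -/
def impN (c : P → P) (x y : P) : Set P := impK c (c y) (c x)


set_option linter.unusedSectionVars false
set_option linter.unusedVariables false

section AuxStmt18


variable {c : P → P}

lemma lb_pair' {a b t : P} : t ∈ lowerBounds ({a, b} : Set P) ↔ t ≤ a ∧ t ≤ b :=
  ⟨fun h => ⟨h (Set.mem_insert _ _), h (Set.mem_insert_of_mem _ rfl)⟩,
   fun h u hu => by rcases hu with rfl | rfl; exacts [h.1, h.2]⟩

lemma ub_pair' {a b t : P} : t ∈ upperBounds ({a, b} : Set P) ↔ a ≤ t ∧ b ≤ t :=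
  ⟨fun h => ⟨h (Set.mem_insert _ _), h (Set.mem_insert_of_mem _ rfl)⟩,
   fun h u hu => by rcases hu with rfl | rfl; exacts [h.1, h.2]⟩

lemma hai_anti (hinv : HasAntitoneInvol c) {a b : P} (h : a ≤ b) : c b ≤ c a := hinv.1 a b h

lemma hai_cc (hinv : HasAntitoneInvol c) (a : P) : c (c a) = a := hinv.2 a

lemma hai_le_c (hinv : HasAntitoneInvol c) {a b : P} (h : a ≤ c b) : b ≤ c a := by
  have h2 := hai_anti hinv h
  rwa [hai_cc hinv] at h2

lemma ctop_eq (hinv : HasAntitoneInvol c) : c ⊤ = ⊥ := by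
  have h : c ⊤ ≤ c (c ⊥) := hai_anti hinv le_top
  rw [hai_cc hinv] at h
  exact le_antisymm h bot_le

lemma cbot_eq (hinv : HasAntitoneInvol c) : c ⊥ = ⊤ := by
  have h : c (c ⊤) ≤ c ⊥ := hai_anti hinv bot_le
  rw [hai_cc hinv] at h
  exact le_antisymm le_top h

lemma glb_neg (hinv : HasAntitoneInvol c) {a b z : P} (h : IsLUB ({a, b} : Set P) z) :
    IsGLB ({c a, c b} : Set P) (c z) := by
  obtain ⟨h1, h2⟩ := h
  obtain ⟨ha, hb⟩ := ub_pair'.mp h1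
  constructor
  · exact lb_pair'.mpr ⟨hai_anti hinv ha, hai_anti hinv hb⟩
  · intro t ht
    obtain ⟨ht1, ht2⟩ := lb_pair'.mp ht
    have hz : z ≤ c t := h2 (ub_pair'.mpr ⟨hai_le_c hinv ht1, hai_le_c hinv ht2⟩)
    exact hai_le_c hinv hz

lemma lub_neg (hinv : HasAntitoneInvol c) {a b z : P} (h : IsGLB ({a, b} : Set P) z) :
    IsLUB ({c a, c b} : Set P) (c z) := by
  obtain ⟨h1, h2⟩ := h
  obtain ⟨ha, hb⟩ := lb_pair'.mp h1
  constructor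
  · exact ub_pair'.mpr ⟨hai_anti hinv ha, hai_anti hinv hb⟩
  · intro t ht
    obtain ⟨ht1, ht2⟩ := ub_pair'.mp ht
    have hz1 : c a ≤ t := ht1
    have hz : c t ≤ z := h2 (lb_pair'.mpr ⟨by
      have := hai_anti hinv ht1; rwa [hai_cc hinv] at this, by
      have := hai_anti hinv ht2; rwa [hai_cc hinv] at this⟩)
    have := hai_anti hinv hz
    have h3 := hai_cc hinv t
    calc c z ≤ c (c t) := hai_anti hinv hz
    _ = t := hai_cc hinv t

lemma maxE_lb_of_le {x y : P} (h : x ≤ y) :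
    MaxE (lowerBounds ({x, y} : Set P)) = {x} := by
  ext m
  simp only [MaxE, Set.mem_setOf_eq, Set.mem_singleton_iff]
  constructor
  · rintro ⟨hm, hmax⟩
    exact (hmax x (lb_pair'.mpr ⟨le_rfl, h⟩) (lb_pair'.mp hm).1).symm
  · rintro rfl
    exact ⟨lb_pair'.mpr ⟨le_rfl, h⟩, fun t ht hxt => le_antisymm (lb_pair'.mp ht).1 hxt⟩


lemma impS_eq_top_of_le (hoc : IsLUB ({c x, x} : Set P) ⊤) (h : x ≤ y) :
    impS c x y = {(⊤ : P)} := by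
  ext z
  simp only [impS, maxE_lb_of_le h, Set.mem_setOf_eq, Set.mem_singleton_iff,
    exists_eq_left]
  exact ⟨fun hz => hz.unique hoc, fun hz => hz ▸ hoc⟩

lemma impD_eq_top_of_le (hinv : HasAntitoneInvol c)
    (hoc : IsLUB ({y, c y} : Set P) ⊤) (h : x ≤ y) :
    impD c x y = {(⊤ : P)} := by
  have hmax : MaxE (lowerBounds ({c x, c y} : Set P)) = {c y} := by
    rw [Set.pair_comm]
    exact maxE_lb_of_le (hai_anti hinv h)
  ext z
  simp only [impD, hmax, Set.mem_setOf_eq, Set.mem_singleton_iff, exists_eq_left]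
  exact ⟨fun hz => hz.unique hoc, fun hz => hz ▸ hoc⟩

lemma paraOM_to_S (hinv : HasAntitoneInvol c) (horth : IsOrthogonalPoset c)
    (hlub : IsLubComplete (P := P)) (hp : IsParaOM c) :
    ∀ x y : P, impS c x y = {(⊤ : P)} → x ≤ y := by
  intro x y h
  obtain ⟨w, hw, -⟩ := hlub.1 {x, y} (Set.toFinite _) ⊥ (fun a _ => bot_le)
  have hwx : w ≤ x := (lb_pair'.mp hw.1).1
  have hwy : w ≤ y := (lb_pair'.mp hw.1).2
  obtain ⟨z, hz⟩ := horth w (c x) (by rw [hai_cc hinv]; exact hwx)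
  have hz' : IsLUB ({c x, w} : Set P) z := by rwa [Set.pair_comm] at hz
  have hzt : z = ⊤ := by
    have hmem : z ∈ impS c x y := ⟨w, hw, hz'⟩
    rw [h] at hmem; exact hmem
  have hglb := glb_neg hinv (hzt ▸ hz')
  rw [hai_cc hinv, ctop_eq hinv] at hglb
  have hglb' : IsGLB ({c w, x} : Set P) ⊥ := by rwa [Set.pair_comm] at hglb
  have hwxeq := hp w x hwx hglb'
  exact hwxeq ▸ hwy

lemma paraOM_to_D (hinv : HasAntitoneInvol c) (horth : IsOrthogonalPoset c)
    (hlub : IsLubComplete (P := P)) (hp : IsParaOM c) :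
    ∀ x y : P, impD c x y = {(⊤ : P)} → x ≤ y := by
  intro x y h
  obtain ⟨w, hw, -⟩ := hlub.1 {c x, c y} (Set.toFinite _) ⊥ (fun a _ => bot_le)
  have hwx : w ≤ c x := (lb_pair'.mp hw.1).1
  have hwy : w ≤ c y := (lb_pair'.mp hw.1).2
  obtain ⟨z, hz⟩ := horth w y hwy
  have hz' : IsLUB ({y, w} : Set P) z := by rwa [Set.pair_comm] at hz
  have hzt : z = ⊤ := by
    have hmem : z ∈ impD c x y := ⟨w, hw, hz'⟩
    rw [h] at hmem; exact hmem
  have hglb := glb_neg hinv (hzt ▸ hz')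
  rw [ctop_eq hinv] at hglb
  have hycw : y ≤ c w := hai_le_c hinv hwy
  have := hp y (c w) hycw hglb
  have hwcy : w = c y := by rw [this, hai_cc hinv]
  rw [hwcy] at hwx
  have := hai_anti hinv hwx
  rwa [hai_cc hinv, hai_cc hinv] at this

lemma S_to_paraOM (hinv : HasAntitoneInvol c)
    (H : ∀ x y : P, impS c x y = {(⊤ : P)} → x ≤ y) : IsParaOM c := by
  intro x y hxy hglb
  have hlubt : IsLUB ({x, c y} : Set P) ⊤ := by
    have h2 := lub_neg hinv hglb
    rwa [hai_cc hinv, cbot_eq hinv] at h2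
  have hlubt' : IsLUB ({c y, x} : Set P) ⊤ := by rwa [Set.pair_comm] at hlubt
  have hmax : MaxE (lowerBounds ({y, x} : Set P)) = {x} := by
    rw [Set.pair_comm]; exact maxE_lb_of_le hxy
  have himp : impS c y x = {(⊤ : P)} := by
    ext z
    simp only [impS, hmax, Set.mem_setOf_eq, Set.mem_singleton_iff, exists_eq_left]
    exact ⟨fun hz => hz.unique hlubt', fun hz => hz ▸ hlubt'⟩
  exact le_antisymm hxy (H y x himp)

lemma D_to_paraOM (hinv : HasAntitoneInvol c)
    (H : ∀ x y : P, impD c x y = {(⊤ : P)} → x ≤ y) : IsParaOM c := by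
  intro x y hxy hglb
  have hlubt : IsLUB ({x, c y} : Set P) ⊤ := by
    have h2 := lub_neg hinv hglb
    rwa [hai_cc hinv, cbot_eq hinv] at h2
  have hmax : MaxE (lowerBounds ({c y, c x} : Set P)) = {c y} :=
    maxE_lb_of_le (hai_anti hinv hxy)
  have himp : impD c y x = {(⊤ : P)} := by
    ext z
    simp only [impD, hmax, Set.mem_setOf_eq, Set.mem_singleton_iff, exists_eq_left]
    exact ⟨fun hz => hz.unique hlubt, fun hz => hz ▸ hlubt⟩
  exact le_antisymm hxy (H y x himp)

lemma om_paraOM (hom : IsOM c) : IsParaOM c := by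
  intro x y hxy hglb
  obtain ⟨m, hm, hl⟩ := hom.2 x y hxy
  have hmb : m = ⊥ := hm.unique (by rwa [Set.pair_comm] at hglb)
  subst hmb
  have hx : IsLUB ({x, ⊥} : Set P) x :=
    ⟨ub_pair'.mpr ⟨le_rfl, bot_le⟩, fun t ht => (ub_pair'.mp ht).1⟩
  exact (hl.unique hx).symm

lemma om_oc (hinv : HasAntitoneInvol c) (hom : IsOM c) (z : P) :
    IsLUB ({c z, z} : Set P) ⊤ := by
  obtain ⟨m, hm, hl⟩ := hom.2 z ⊤ le_top
  have hcz : IsGLB ({⊤, c z} : Set P) (c z) :=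
    ⟨lb_pair'.mpr ⟨le_top, le_rfl⟩, fun t ht => (lb_pair'.mp ht).2⟩
  have hmcz : m = c z := hm.unique hcz
  subst hmcz
  rwa [Set.pair_comm] at hl

lemma paraOC_to_OM (hinv : HasAntitoneInvol c) (horth : IsOrthogonalPoset c)
    (hp : IsParaOM c) (hoc : ∀ z : P, IsLUB ({c z, z} : Set P) ⊤) : IsOM c := by
  refine ⟨horth, fun x y hxy => ?_⟩
  obtain ⟨k, hk⟩ := horth x (c y) (by rw [hai_cc hinv]; exact hxy)
  have hm : IsGLB ({c x, y} : Set P) (c k) := by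
    have h2 := glb_neg hinv hk
    rwa [hai_cc hinv] at h2
  have hmcx : c k ≤ c x := hm.1 (Set.mem_insert _ _)
  have hmy : c k ≤ y := hm.1 (Set.mem_insert_of_mem _ rfl)
  obtain ⟨z, hz⟩ := horth x (c k) (hai_le_c hinv hmcx)
  have hzy : z ≤ y := hz.2 (ub_pair'.mpr ⟨hxy, hmy⟩)
  have hglbz : IsGLB ({c z, y} : Set P) ⊥ := by
    constructor
    · exact lb_pair'.mpr ⟨bot_le, bot_le⟩
    · intro t ht
      obtain ⟨ht1, ht2⟩ := lb_pair'.mp ht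
      have hxz : x ≤ z := hz.1 (Set.mem_insert _ _)
      have htcx : t ≤ c x := le_trans ht1 (hai_anti hinv hxz)
      have htm : t ≤ c k := hm.2 (lb_pair'.mpr ⟨htcx, ht2⟩)
      have htz : t ≤ z := le_trans htm (hz.1 (Set.mem_insert_of_mem _ rfl))
      have hbot : IsGLB ({z, c z} : Set P) ⊥ := by
        have h3 := glb_neg hinv (hoc z)
        rwa [hai_cc hinv, ctop_eq hinv] at h3
      exact hbot.2 (lb_pair'.mpr ⟨htz, ht1⟩)
  have hzeq : z = y := hp z y hzy hglbz
  exact ⟨c k, by rwa [Set.pair_comm] at hm, hzeq ▸ hz⟩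

lemma S_oc (hinv : HasAntitoneInvol c) (horth : IsOrthogonalPoset c)
    (H : ∀ x y : P, x ≤ y ↔ impS c x y = {(⊤ : P)}) (z : P) :
    IsLUB ({c z, z} : Set P) ⊤ := by
  obtain ⟨j, hj⟩ := horth z (c z) (by rw [hai_cc hinv])
  have hj' : IsLUB ({c z, z} : Set P) j := by rwa [Set.pair_comm] at hj
  have hmem : j ∈ impS c z z := ⟨z, by rw [maxE_lb_of_le (le_refl z)]; rfl, hj'⟩
  rw [(H z z).mp le_rfl] at hmem
  exact hmem ▸ hj'

lemma D_oc (hinv : HasAntitoneInvol c) (horth : IsOrthogonalPoset c)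
    (H : ∀ x y : P, x ≤ y ↔ impD c x y = {(⊤ : P)}) (z : P) :
    IsLUB ({c z, z} : Set P) ⊤ := by
  obtain ⟨j, hj⟩ := horth z (c z) (by rw [hai_cc hinv])
  have hmem : j ∈ impD c z z := ⟨c z, by rw [maxE_lb_of_le (le_refl (c z))]; rfl, hj⟩
  rw [(H z z).mp le_rfl] at hmem
  have := hmem ▸ hj
  rwa [Set.pair_comm] at this

end AuxStmt18

/-- paraorthomodularity and orthomodularity characterized via →_S and →_D. -/
theorem stmt18 (c : P → P) (hinv : HasAntitoneInvol c) (horth : IsOrthogonalPoset c)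
    (hlub : IsLubComplete (P := P)) :
    (IsParaOM c ↔ ∀ x y : P, impS c x y = {(⊤ : P)} → x ≤ y) ∧
    (IsParaOM c ↔ ∀ x y : P, impD c x y = {(⊤ : P)} → x ≤ y) ∧
    (IsOM c ↔ ∀ x y : P, x ≤ y ↔ impS c x y = {(⊤ : P)}) ∧
    (IsOM c ↔ ∀ x y : P, x ≤ y ↔ impD c x y = {(⊤ : P)}) := by
  refine ⟨⟨paraOM_to_S hinv horth hlub, S_to_paraOM hinv⟩,
    ⟨paraOM_to_D hinv horth hlub, D_to_paraOM hinv⟩, ⟨?_, ?_⟩, ⟨?_, ?_⟩⟩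
  · intro hom x y
    exact ⟨impS_eq_top_of_le (om_oc hinv hom x),
      fun h => paraOM_to_S hinv horth hlub (om_paraOM hom) x y h⟩
  · intro H
    exact paraOC_to_OM hinv horth
      (S_to_paraOM hinv (fun x y h => (H x y).mpr h)) (S_oc hinv horth H)
  · intro hom x y
    refine ⟨fun h => impD_eq_top_of_le hinv ?_ h,
      fun h => paraOM_to_D hinv horth hlub (om_paraOM hom) x y h⟩
    have := om_oc hinv hom y
    rwa [Set.pair_comm] at this
  · intro H
    exact paraOC_to_OM hinv horth
      (D_to_paraOM hinv (fun x y h => (H x y).mpr h)) (D_oc hinv horth H)
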